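/- Let W be a finite alphabet, Π a probability distribution on W^n with ‖Π − Γ^{⊗n}‖_TV ≤ ε < 1/4 for some distribution Γ on W, and let T be uniformly distributed on {1,…,n} and independent of W^n ∼ Π. Then I(W_T ; T) ≤ 4ε(log|W| + log(1/ε)). -/

import Mathlib

open MeasureTheory Real

/-- Total variation distance between two measures. -/
noncomputable def tvDist {α : Type*} [MeasurableSpace α] (μ ν : Measure α) : ℝ :=
  ⨆ s : {s : Set α // MeasurableSet s}, |(μ s.1).toReal - (ν s.1).toReal|

/-- Shannon entropy (base 2) of a distribution on a finite type. -/
noncomputable def entropy {α : Type*} [Fintype α] [MeasurableSpace α] (μ : Measure α) : ℝ :=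
  -∑ x : α, (μ {x}).toReal * Real.logb 2 (μ {x}).toReal

/-- Shannon mutual information (base 2) between the coordinates of a joint distribution. -/
noncomputable def mutualInfo {α β : Type*} [Fintype α] [MeasurableSpace α]
    [Fintype β] [MeasurableSpace β] (μ : Measure (α × β)) : ℝ :=
  entropy (μ.map Prod.fst) + entropy (μ.map Prod.snd) - entropy μ

/-- The uniform distribution on a finite type. -/
noncomputable def unif (α : Type*) [Fintype α] [MeasurableSpace α] : Measure α :=
  (Fintype.card α : ENNReal)⁻¹ • Measure.count

/-!
Let `c t` be the law of the `t`-th coordinate under `Π`. The law of `(W_T, T)` has masses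
`c t w / n`, so `I(W_T; T) = H(n⁻¹ ∑ₜ c t) - n⁻¹ ∑ₜ H(c t)`. Total variation only decreases under
the coordinate maps, so every `c t`, and hence their average, is `2ε`-close to `Γ` in `ℓ¹`. The
continuity bound `|H p - H q| ≤ δ log |W| + η δ` for `δ = ‖p - q‖₁` and `η x = -x log x` puts
both terms within `2ε (log |W| + log (1/ε))` of `H Γ`.
-/

open Finset

namespace Real

lemma negMulLog_le_exp_neg_one {x : ℝ} (hx : 0 ≤ x) : negMulLog x ≤ exp (-1) := by
  rcases hx.eq_or_lt with rfl | hx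
  · simp [(exp_pos _).le]
  simpa [exp_log hx, negMulLog, mul_comm] using mul_exp_neg_le_exp_neg_one (-log x)

lemma self_le_negMulLog {x : ℝ} (hx : 0 ≤ x) (hxe : x ≤ exp (-1)) : x ≤ negMulLog x := by
  rcases hx.eq_or_lt with rfl | hx
  · simp
  have : log x ≤ -1 := by simpa using log_le_log hx hxe
  simp only [negMulLog, neg_mul]
  nlinarith

lemma negMulLog_add_le {a b : ℝ} (ha : 0 ≤ a) (hb : 0 ≤ b) :
    negMulLog (a + b) ≤ negMulLog a + negMulLog b := by
  have hmono : ∀ {x y : ℝ}, 0 ≤ x → 0 ≤ y → x * log x ≤ x * log (x + y) := by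
    intro x y hx hy
    rcases hx.eq_or_lt with rfl | hx
    · simp
    exact mul_le_mul_of_nonneg_left (log_le_log hx (by linarith)) hx.le
  have := hmono ha hb
  have := hmono hb ha
  simp only [negMulLog, neg_mul, add_comm b a] at *
  nlinarith

lemma negMulLog_sub_negMulLog_add_le {a d : ℝ} (ha : 0 ≤ a) (hd : 0 ≤ d) (had : a + d ≤ 1) :
    negMulLog a - negMulLog (a + d) ≤ d := by
  have hd_log : d * log (a + d) ≤ 0 :=
    mul_nonpos_of_nonneg_of_nonpos hd (log_nonpos (by positivity) had)
  rcases ha.eq_or_lt with rfl | ha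
  · simp only [zero_add, negMulLog] at *
    linarith
  have hlog : a * (log (a + d) - log a) ≤ d := by
    have := log_le_sub_one_of_pos (show 0 < (a + d) / a by positivity)
    rw [log_div (by positivity) ha.ne'] at this
    calc a * (log (a + d) - log a) ≤ a * ((a + d) / a - 1) :=
          mul_le_mul_of_nonneg_left this ha.le
      _ = d := by field_simp; ring
  simp only [negMulLog, neg_mul]
  nlinarith

lemma abs_negMulLog_sub_le {a b : ℝ} (ha : 0 ≤ a) (hb : 0 ≤ b) (ha1 : a ≤ 1) (hb1 : b ≤ 1)
    (hab : |a - b| ≤ exp (-1)) : |negMulLog a - negMulLog b| ≤ negMulLog |a - b| := by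
  wlog h : a ≤ b generalizing a b
  · rw [abs_sub_comm, abs_sub_comm a]
    exact this hb ha hb1 ha1 (by rwa [abs_sub_comm]) (by linarith)
  obtain ⟨d, hd, rfl⟩ : ∃ d, 0 ≤ d ∧ b = a + d := ⟨b - a, by linarith, by ring⟩
  rw [show |a - (a + d)| = d by rw [sub_add_cancel_left, abs_neg, abs_of_nonneg hd]] at hab ⊢
  rw [abs_sub_le_iff]
  constructor
  · exact (negMulLog_sub_negMulLog_add_le ha hd hb1).trans (self_le_negMulLog hd hab)
  · linarith [negMulLog_add_le ha hd]

lemma negMulLog_le_negMulLog_add {s x : ℝ} (hs : 0 ≤ s) (hsx : s ≤ x) (hx : x ≤ 1) :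
    negMulLog s ≤ negMulLog x + x * exp (-1) := by
  have hηx := negMulLog_nonneg (hs.trans hsx) hx
  rcases hs.eq_or_lt with rfl | hs
  · simp only [negMulLog_zero]
    positivity
  have hx0 : 0 < x := hs.trans_le hsx
  have hsx' : s / x ≤ 1 := (div_le_one hx0).2 hsx
  calc negMulLog s = s / x * negMulLog x + x * negMulLog (s / x) := by
        rw [← negMulLog_mul, mul_div_cancel₀ _ hx0.ne']
    _ ≤ 1 * negMulLog x + x * exp (-1) := by
        gcongr
        exact negMulLog_le_exp_neg_one (by positivity)
    _ = negMulLog x + x * exp (-1) := by ring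

lemma sum_negMulLog_le {α : Type*} [Fintype α] {d : α → ℝ} (hd : ∀ x, 0 ≤ d x) :
    ∑ x, negMulLog (d x) ≤ (∑ x, d x) * log (Fintype.card α) + negMulLog (∑ x, d x) := by
  rcases isEmpty_or_nonempty α with hα | hα
  · simp
  set N : ℝ := (Fintype.card α : ℝ)
  have hN : 0 < N := by simp [N, Fintype.card_pos]
  have jensen := concaveOn_negMulLog.le_map_sum (t := univ) (w := fun _ => N⁻¹) (p := d)
    (fun _ _ => by positivity) (by simp [N, hN.ne']) (fun x _ => Set.mem_Ici.2 (hd x))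
  simp only [smul_eq_mul, ← mul_sum, negMulLog_mul] at jensen
  have hηN : negMulLog N⁻¹ = N⁻¹ * log N := by simp [negMulLog, log_inv]
  rw [hηN] at jensen
  have := mul_le_mul_of_nonneg_left jensen hN.le
  field_simp at this
  linarith

end Real

section ProbabilityVector

variable {α : Type*} [Fintype α]

lemma two_mul_abs_sub_le_sum_abs_sub {p q : α → ℝ} (h : ∑ x, p x = ∑ x, q x) (x : α) :
    2 * |p x - q x| ≤ ∑ y, |p y - q y| := by
  classical
  have hsum : ∑ y, (p y - q y) = 0 := by rw [sum_sub_distrib, h, sub_self]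
  rw [← add_sum_erase _ _ (mem_univ x)] at hsum ⊢
  have : |p x - q x| ≤ ∑ y ∈ univ.erase x, |p y - q y| := by
    rw [eq_neg_of_add_eq_zero_left hsum, abs_neg]
    exact abs_sum_le_sum_abs _ _
  linarith

lemma sum_abs_sub_le_of_forall_abs_sum_sub_le {p q : α → ℝ} {ε : ℝ}
    (h : ∀ s : Finset α, |∑ x ∈ s, (p x - q x)| ≤ ε) : ∑ x, |p x - q x| ≤ 2 * ε := by
  classical
  set s := univ.filter fun x => q x ≤ p x
  set t := univ.filter fun x => ¬q x ≤ p x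
  have hs : ∑ x ∈ s, |p x - q x| = ∑ x ∈ s, (p x - q x) :=
    sum_congr rfl fun x hx => abs_of_nonneg (sub_nonneg.2 (mem_filter.1 hx).2)
  have ht : ∑ x ∈ t, |p x - q x| = -∑ x ∈ t, (p x - q x) := by
    rw [← sum_neg_distrib]
    exact sum_congr rfl fun x hx => abs_of_neg (sub_neg.2 (not_le.1 (mem_filter.1 hx).2))
  rw [← sum_filter_add_sum_filter_not univ (fun x => q x ≤ p x), hs, ht]
  linarith [(abs_le.1 (h s)).2, (abs_le.1 (h t)).1]

/-- A Fannes-type continuity bound for Shannon entropy. -/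
theorem abs_sum_negMulLog_sub_le {p q : α → ℝ} (hp : ∀ x, 0 ≤ p x) (hq : ∀ x, 0 ≤ q x)
    (hp1 : ∑ x, p x = 1) (hq1 : ∑ x, q x = 1) {ε : ℝ} (hε : ε ≤ 1 / 4)
    (hpq : ∑ x, |p x - q x| ≤ 2 * ε) :
    |∑ x, negMulLog (p x) - ∑ x, negMulLog (q x)|
      ≤ 2 * ε * (log (Fintype.card α) + log (1 / ε)) := by
  set S := ∑ x, |p x - q x|
  have hS : 0 ≤ S := sum_nonneg fun _ _ => abs_nonneg _
  have hle_one {r : α → ℝ} (hr : ∀ x, 0 ≤ r x) (hr1 : ∑ x, r x = 1) (x : α) : r x ≤ 1 :=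
    hr1 ▸ single_le_sum (fun y _ => hr y) (mem_univ x)
  have hexp_one : 2 ≤ exp 1 ∧ exp 1 ≤ 4 :=
    ⟨by linarith [add_one_le_exp 1], by linarith [exp_one_lt_d9]⟩
  have hexp_neg_one : 1 / 4 ≤ exp (-1) ∧ exp (-1) ≤ 1 / 2 := by
    rw [exp_neg]
    constructor
    · rw [one_div]; gcongr; exact hexp_one.2
    · rw [one_div]; gcongr; exact hexp_one.1
  have hpt (x : α) : |p x - q x| ≤ exp (-1) := by
    linarith [two_mul_abs_sub_le_sum_abs_sub (hp1.trans hq1.symm) x]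
  have hηS : negMulLog S ≤ 2 * ε * log (1 / ε) := by
    have hε0 : 0 ≤ ε := by linarith
    calc negMulLog S ≤ negMulLog (2 * ε) + 2 * ε * exp (-1) :=
          negMulLog_le_negMulLog_add hS hpq (by linarith)
      _ = 2 * ε * log (1 / ε) - 2 * ε * (log 2 - exp (-1)) := by
          rw [negMulLog_mul, one_div, log_inv]
          simp only [negMulLog]
          ring
      _ ≤ 2 * ε * log (1 / ε) := by
          have := log_two_gt_d9
          nlinarith
  calc |∑ x, negMulLog (p x) - ∑ x, negMulLog (q x)|
      ≤ ∑ x, |negMulLog (p x) - negMulLog (q x)| := by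
        rw [← sum_sub_distrib]
        exact abs_sum_le_sum_abs _ _
    _ ≤ ∑ x, negMulLog |p x - q x| := sum_le_sum fun x _ =>
        abs_negMulLog_sub_le (hp x) (hq x) (hle_one hp hp1 x) (hle_one hq hq1 x) (hpt x)
    _ ≤ S * log (Fintype.card α) + negMulLog S := sum_negMulLog_le fun _ => abs_nonneg _
    _ ≤ 2 * ε * log (Fintype.card α) + 2 * ε * log (1 / ε) :=
        add_le_add (mul_le_mul_of_nonneg_right hpq (log_natCast_nonneg _)) hηS
    _ = 2 * ε * (log (Fintype.card α) + log (1 / ε)) := by ring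

lemma sum_sum_negMulLog_mul {β : Type*} [Fintype β] (u : β → ℝ) {c : β → α → ℝ}
    (hc1 : ∀ b, ∑ x, c b x = 1) :
    ∑ b, ∑ x, negMulLog (u b * c b x)
      = ∑ b, negMulLog (u b) + ∑ b, u b * ∑ x, negMulLog (c b x) := by
  simp only [negMulLog_mul, sum_add_distrib, ← sum_mul, ← mul_sum, hc1, one_mul]

theorem sum_negMulLog_mix_sub_le {β : Type*} [Fintype β] {u : β → ℝ} {c : β → α → ℝ}
    {g : α → ℝ} {ε : ℝ} (hu : ∀ b, 0 ≤ u b) (hu1 : ∑ b, u b = 1) (hc : ∀ b x, 0 ≤ c b x)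
    (hc1 : ∀ b, ∑ x, c b x = 1) (hg : ∀ x, 0 ≤ g x) (hg1 : ∑ x, g x = 1) (hε : ε ≤ 1 / 4)
    (hcg : ∀ b, ∑ x, |c b x - g x| ≤ 2 * ε) :
    ∑ x, negMulLog (∑ b, u b * c b x) - ∑ b, u b * ∑ x, negMulLog (c b x)
      ≤ 4 * ε * (log (Fintype.card α) + log (1 / ε)) := by
  set B := 2 * ε * (log (Fintype.card α) + log (1 / ε))
  set m := fun x => ∑ b, u b * c b x
  have hm (x : α) : 0 ≤ m x := sum_nonneg fun b _ => mul_nonneg (hu b) (hc b x)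
  have hm1 : ∑ x, m x = 1 := by
    simp only [m]
    rw [sum_comm]
    simp [← mul_sum, hc1, hu1]
  have hmg : ∑ x, |m x - g x| ≤ 2 * ε :=
    calc ∑ x, |m x - g x| = ∑ x, |∑ b, u b * (c b x - g x)| := by
          simp [m, mul_sub, sum_sub_distrib, ← sum_mul, hu1]
      _ ≤ ∑ x, ∑ b, u b * |c b x - g x| := sum_le_sum fun x _ =>
          (abs_sum_le_sum_abs _ _).trans_eq (by simp [abs_mul, abs_of_nonneg (hu _)])
      _ = ∑ b, u b * ∑ x, |c b x - g x| := by
          rw [sum_comm]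
          simp [mul_sum]
      _ ≤ ∑ b, u b * (2 * ε) := sum_le_sum fun b _ => mul_le_mul_of_nonneg_left (hcg b) (hu b)
      _ = 2 * ε := by rw [← sum_mul, hu1, one_mul]
  have hmix := (abs_le.1 (abs_sum_negMulLog_sub_le hm hg hm1 hg1 hε hmg)).2
  have hcomp : ∑ x, negMulLog (g x) - B ≤ ∑ b, u b * ∑ x, negMulLog (c b x) :=
    calc ∑ x, negMulLog (g x) - B = ∑ b, u b * (∑ x, negMulLog (g x) - B) := by
          rw [← sum_mul, hu1, one_mul]
      _ ≤ _ := sum_le_sum fun b _ => mul_le_mul_of_nonneg_left (by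
          linarith [(abs_le.1 (abs_sum_negMulLog_sub_le (hc b) hg (hc1 b) hg1 hε (hcg b))).1])
          (hu b)
  linarith

end ProbabilityVector

section FiniteMeasures

variable {α β : Type*} [MeasurableSpace α] [MeasurableSpace β]

lemma abs_measureReal_sub_le_tvDist (μ ν : Measure α) [IsFiniteMeasure μ] [IsFiniteMeasure ν]
    {s : Set α} (hs : MeasurableSet s) : |μ.real s - ν.real s| ≤ tvDist μ ν := by
  refine le_ciSup (f := fun s : {s : Set α // MeasurableSet s} =>
    |(μ s.1).toReal - (ν s.1).toReal|) ⟨μ.real Set.univ + ν.real Set.univ, ?_⟩ ⟨s, hs⟩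
  rintro _ ⟨t, rfl⟩
  have hμ := measureReal_mono (μ := μ) (Set.subset_univ t.1)
  have hν := measureReal_mono (μ := ν) (Set.subset_univ t.1)
  have := measureReal_nonneg (μ := μ) (s := t.1)
  have := measureReal_nonneg (μ := ν) (s := t.1)
  simp only [← measureReal_def, abs_sub_le_iff]
  constructor <;> linarith

lemma tvDist_map_le (μ ν : Measure α) [IsFiniteMeasure μ] [IsFiniteMeasure ν] {f : α → β}
    (hf : Measurable f) : tvDist (μ.map f) (ν.map f) ≤ tvDist μ ν := by
  have : Nonempty {s : Set β // MeasurableSet s} := ⟨⟨∅, MeasurableSet.empty⟩⟩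
  refine ciSup_le fun s => ?_
  rw [← measureReal_def, ← measureReal_def, map_measureReal_apply hf s.2,
    map_measureReal_apply hf s.2]
  exact abs_measureReal_sub_le_tvDist μ ν (hf s.2)

lemma entropy_eq_sum_negMulLog [Fintype α] (μ : Measure α) :
    entropy μ = (∑ x, negMulLog (μ.real {x})) / log 2 := by
  rw [entropy, sum_div, ← sum_neg_distrib]
  refine sum_congr rfl fun x _ => ?_
  rw [negMulLog, logb, measureReal_def]
  ring

lemma sum_measureReal_singleton_eq_one [Fintype α] [MeasurableSingletonClass α] (μ : Measure α)
    [IsProbabilityMeasure μ] : ∑ x, μ.real {x} = 1 := by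
  rw [sum_measureReal_singleton, coe_univ, probReal_univ]

lemma sum_abs_measureReal_singleton_sub_le [Fintype α] [MeasurableSingletonClass α]
    (μ ν : Measure α) [IsFiniteMeasure μ] [IsFiniteMeasure ν] :
    ∑ x, |μ.real {x} - ν.real {x}| ≤ 2 * tvDist μ ν :=
  sum_abs_sub_le_of_forall_abs_sum_sub_le fun s => by
    rw [sum_sub_distrib, sum_measureReal_singleton, sum_measureReal_singleton]
    exact abs_measureReal_sub_le_tvDist μ ν s.measurableSet

lemma map_fst_measureReal_singleton [MeasurableSingletonClass α] [Fintype β]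
    [MeasurableSingletonClass β] (μ : Measure (α × β)) [IsFiniteMeasure μ] (a : α) :
    (μ.map Prod.fst).real {a} = ∑ b, μ.real {(a, b)} := by
  rw [map_measureReal_apply measurable_fst (measurableSet_singleton a),
    show Prod.fst ⁻¹' {a} = (({a} ×ˢ univ : Finset (α × β)) : Set (α × β)) by
      ext ⟨a', b⟩; simp [eq_comm],
    ← sum_measureReal_singleton, sum_product, sum_singleton]

lemma map_snd_measureReal_singleton [Fintype α] [MeasurableSingletonClass α]
    [MeasurableSingletonClass β] (μ : Measure (α × β)) [IsFiniteMeasure μ] (b : β) :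
    (μ.map Prod.snd).real {b} = ∑ a, μ.real {(a, b)} := by
  rw [map_measureReal_apply measurable_snd (measurableSet_singleton b),
    show Prod.snd ⁻¹' {b} = ((univ ×ˢ {b} : Finset (α × β)) : Set (α × β)) by
      ext ⟨a, b'⟩; simp [eq_comm],
    ← sum_measureReal_singleton, sum_product]
  simp

lemma mutualInfo_eq_of_measureReal_singleton [Fintype α] [MeasurableSingletonClass α]
    [Fintype β] [MeasurableSingletonClass β] (μ : Measure (α × β)) [IsFiniteMeasure μ]
    {u : β → ℝ} {c : β → α → ℝ} (hc1 : ∀ b, ∑ a, c b a = 1)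
    (hμ : ∀ a b, μ.real {(a, b)} = u b * c b a) :
    mutualInfo μ = (∑ a, negMulLog (∑ b, u b * c b a)
      - ∑ b, u b * ∑ a, negMulLog (c b a)) / log 2 := by
  have hsnd (b : β) : (μ.map Prod.snd).real {b} = u b := by
    simp [map_snd_measureReal_singleton, hμ, ← mul_sum, hc1]
  rw [mutualInfo, entropy_eq_sum_negMulLog, entropy_eq_sum_negMulLog, entropy_eq_sum_negMulLog,
    Fintype.sum_prod_type, sum_comm]
  simp only [map_fst_measureReal_singleton, hsnd, hμ, sum_sum_negMulLog_mul u hc1]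
  ring

end FiniteMeasures

instance {α : Type*} [Fintype α] [Nonempty α] [MeasurableSpace α] [MeasurableSingletonClass α] :
    IsProbabilityMeasure (unif α) := by
  constructor
  simp [unif, ENNReal.inv_mul_cancel]

lemma unif_measureReal_singleton {α : Type*} [Fintype α] [MeasurableSpace α]
    [MeasurableSingletonClass α] (x : α) : (unif α).real {x} = (Fintype.card α : ℝ)⁻¹ := by
  simp [unif, measureReal_def]

lemma map_prod_eval_measureReal_singleton {α ι : Type*} [Fintype α] [MeasurableSpace α]
    [MeasurableSingletonClass α] [Fintype ι] [MeasurableSpace ι] [MeasurableSingletonClass ι]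
    (P : Measure (ι → α)) [IsFiniteMeasure P] (ν : Measure ι) [IsFiniteMeasure ν] (a : α) (i : ι) :
    ((P.prod ν).map fun p => (p.1 p.2, p.2)).real {(a, i)}
      = ν.real {i} * (P.map (Function.eval i)).real {a} := by
  rw [map_measureReal_apply (measurable_of_finite _) (measurableSet_singleton _),
    map_measureReal_apply (measurable_pi_apply i) (measurableSet_singleton _),
    show (fun p : (ι → α) × ι => (p.1 p.2, p.2)) ⁻¹' {(a, i)}
      = (Function.eval i ⁻¹' ({a} : Set α)) ×ˢ {i} by ext ⟨x, j⟩; aesop,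
    measureReal_prod_prod, mul_comm]

theorem stmt_5_general {W : Type*} [Fintype W] [MeasurableSpace W] [MeasurableSingletonClass W]
    {n : ℕ} (hn : 0 < n)
    (P : Measure (Fin n → W)) [IsProbabilityMeasure P]
    (G : Measure W) [IsProbabilityMeasure G]
    (ε : ℝ) (hε : ε < 1 / 4)
    (hTV : tvDist P (Measure.pi fun _ => G) ≤ ε) :
    mutualInfo ((P.prod (unif (Fin n))).map fun p => (p.1 p.2, p.2))
      ≤ 4 * ε * (Real.logb 2 (Fintype.card W) + Real.logb 2 (1 / ε)) := by
  have : NeZero n := ⟨hn.ne'⟩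
  have (t : Fin n) : IsProbabilityMeasure (P.map (Function.eval t)) :=
    Measure.isProbabilityMeasure_map (measurable_pi_apply t).aemeasurable
  have hclose (t : Fin n) :
      ∑ w, |(P.map (Function.eval t)).real {w} - G.real {w}| ≤ 2 * ε := by
    rw [← (measurePreserving_eval (fun _ => G) t).map_eq]
    calc _ ≤ 2 * tvDist (P.map (Function.eval t))
          ((Measure.pi fun _ => G).map (Function.eval t)) :=
          sum_abs_measureReal_singleton_sub_le _ _
      _ ≤ 2 * ε := by linarith [tvDist_map_le P (Measure.pi fun _ => G) (measurable_pi_apply t)]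
  rw [mutualInfo_eq_of_measureReal_singleton _ (fun t => sum_measureReal_singleton_eq_one _)
    (map_prod_eval_measureReal_singleton P (unif (Fin n))), logb, logb, ← add_div,
    ← mul_div_assoc]
  refine div_le_div_of_nonneg_right ?_ (log_nonneg one_le_two)
  simp only [unif_measureReal_singleton, Fintype.card_fin]
  exact sum_negMulLog_mix_sub_le (fun _ => by positivity) (by simp) (fun _ _ => measureReal_nonneg)
    (fun _ => sum_measureReal_singleton_eq_one _) (fun _ => measureReal_nonneg)
    (sum_measureReal_singleton_eq_one G) hε.le hclose

/-- If Π is ε-close in TV to an i.i.d. product Γ^{⊗n} with ε < 1/4, and T is an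
independent uniform index, then I(W_T ; T) ≤ 4ε(log|W| + log(1/ε)). -/
theorem stmt_5 {W : Type*} [Fintype W] [MeasurableSpace W] [MeasurableSingletonClass W]
    {n : ℕ} (hn : 0 < n)
    (P : Measure (Fin n → W)) [IsProbabilityMeasure P]
    (G : Measure W) [IsProbabilityMeasure G]
    (ε : ℝ) (hε0 : 0 < ε) (hε : ε < 1 / 4)
    (hTV : tvDist P (Measure.pi fun _ => G) ≤ ε) :
    mutualInfo ((P.prod (unif (Fin n))).map fun p => (p.1 p.2, p.2))
      ≤ 4 * ε * (Real.logb 2 (Fintype.card W) + Real.logb 2 (1 / ε)) :=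
  stmt_5_general hn P G ε hε hTV
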